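/- arXiv:1510.07232 — 3 statements merged into one kernel-verified Lean document; each statement's English description precedes it below -/
import Mathlib

section
/- Let π: S → S̄ be the blow-down of a (-1)-curve E which is a component of an anti-canonical cycle C = C_1 + ... + C_k on S (with C_k = E), and let C̄ = C̄_1 + ... + C̄_{k-1} be the image cycle on S̄. Then the intersection matrix (C_i·C_j)_{1≤i,j≤k} on S is negative definite if and only if the intersection matrix (C̄_i·C̄_j)_{1≤i,j≤k-1} on S̄ is negative definite. -/
/-!
Write `g = e_a + e_b` for the vector of intersection numbers `C_i · E`. Since
`π^* C̄_i = C_i + g_i E`, the upper-left block of `M` is `Mbar - g gᵀ`, its last column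
is `g` and `E² = -1`. Completing the square in the last coordinate `t` gives
`Q_M(y, t) = Q_Mbar(y) - (⟨g, y⟩ - t)²`. Hence the two definiteness conditions are
equivalent: take `t = ⟨g, y⟩` in one direction; in the other, `y = 0` forces `t ≠ 0`.
-/

open Matrix

section

variable {R : Type*} [CommRing R]

theorem dotProduct_mulVec_snoc_eq_sub_sq {m : ℕ}
    (M : Matrix (Fin (m + 1)) (Fin (m + 1)) R) (N : Matrix (Fin m) (Fin m) R) (g : Fin m → R)
    (hM : M.submatrix Fin.castSucc Fin.castSucc = N - vecMulVec g g)
    (hcol : ∀ i, M i.castSucc (Fin.last m) = g i)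
    (hrow : ∀ j, M (Fin.last m) j.castSucc = g j)
    (hlast : M (Fin.last m) (Fin.last m) = -1) (y : Fin m → R) (t : R) :
    Fin.snoc y t ⬝ᵥ M *ᵥ Fin.snoc y t = y ⬝ᵥ N *ᵥ y - (g ⬝ᵥ y - t) ^ 2 := by
  have hM' : ∀ i j, M i.castSucc j.castSucc = N i j - g i * g j := fun i j => congr_fun₂ hM i j
  have hinner : ∀ i, ∑ j, (N i j - g i * g j) * y j = (N *ᵥ y) i - g i * (g ⬝ᵥ y) := by
    intro i
    simp only [mulVec, dotProduct, Finset.mul_sum, ← Finset.sum_sub_distrib]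
    exact Finset.sum_congr rfl fun j _ => by ring
  have hpair : ∀ s, ∑ i, y i * (g i * s) = g ⬝ᵥ y * s := fun s => by
    rw [dotProduct, Finset.sum_mul]
    exact Finset.sum_congr rfl fun i _ => by ring
  simp only [mulVec, dotProduct, Fin.sum_univ_castSucc, Fin.snoc_castSucc, Fin.snoc_last, hM',
    hcol, hrow, hlast, hinner, mul_add, mul_sub, Finset.sum_add_distrib, Finset.sum_sub_distrib,
    hpair]
  ring

theorem eq_sub_vecMulVec_single_add_single {n : Type*} [DecidableEq n] {a b : n} (hab : a ≠ b)
    (A B : Matrix n n R) (hA : A.IsSymm) (hB : B.IsSymm) (hBab : B a b = 1)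
    (h0 : ∀ i j, ¬((i = a ∨ i = b) ∧ (j = a ∨ j = b)) → A i j = B i j)
    (haa : A a a = B a a - 1) (hbb : A b b = B b b - 1) (hAab : A a b = 0) :
    A = B - vecMulVec (Pi.single a 1 + Pi.single b 1) (Pi.single a 1 + Pi.single b 1) := by
  ext i j
  by_cases hcorner : (i = a ∨ i = b) ∧ (j = a ∨ j = b)
  · obtain ⟨rfl | rfl, rfl | rfl⟩ := hcorner
    · simp [vecMulVec_apply, haa, hab.symm]
    · simp [vecMulVec_apply, hAab, hBab, hab, hab.symm]
    · simp [vecMulVec_apply, hA.apply j i, hB.apply j i, hAab, hBab, hab]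
    · simp [vecMulVec_apply, hbb, hab]
  · rw [h0 i j hcorner, Matrix.sub_apply, vecMulVec_apply]
    rw [not_and_or, not_or, not_or] at hcorner
    rcases hcorner with ⟨hia, hib⟩ | ⟨hja, hjb⟩ <;> simp [*]

end

section

variable {R : Type*} [CommRing R] [LinearOrder R] [IsStrictOrderedRing R]

theorem negDef_iff_of_bordered {m : ℕ}
    (M : Matrix (Fin (m + 1)) (Fin (m + 1)) R) (N : Matrix (Fin m) (Fin m) R) (g : Fin m → R)
    (hM : M.submatrix Fin.castSucc Fin.castSucc = N - vecMulVec g g)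
    (hcol : ∀ i, M i.castSucc (Fin.last m) = g i)
    (hrow : ∀ j, M (Fin.last m) j.castSucc = g j)
    (hlast : M (Fin.last m) (Fin.last m) = -1) :
    (∀ x, x ≠ 0 → x ⬝ᵥ M *ᵥ x < 0) ↔ (∀ y, y ≠ 0 → y ⬝ᵥ N *ᵥ y < 0) := by
  have key := dotProduct_mulVec_snoc_eq_sub_sq M N g hM hcol hrow hlast
  constructor
  · intro hMneg y hy
    have hx : (Fin.snoc y (g ⬝ᵥ y) : Fin (m + 1) → R) ≠ 0 := fun h =>
      hy (funext fun i => by simpa using congrFun h i.castSucc)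
    simpa [key] using hMneg _ hx
  · intro hNneg x hx
    rw [← Fin.snoc_init_self x, key]
    by_cases hy : Fin.init x = 0
    · have ht : x (Fin.last m) ≠ 0 := fun ht => hx <| funext fun i => by
        induction i using Fin.lastCases with
        | last => exact ht
        | cast j => exact congrFun hy j
      simp [hy]
      positivity
    · nlinarith [hNneg _ hy, sq_nonneg (g ⬝ᵥ Fin.init x - x (Fin.last m))]

end

/-- Blow-down of a `(-1)`-curve `E = C_k` which is a component of an anticanonical
cycle `C = C_1 + … + C_k` on a smooth rational surface `S`, with image cycle
`C̄ = C̄_1 + … + C̄_{k-1}` on `S̄`.  `M` is the intersection matrix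
`(C_i · C_j)_{1≤i,j≤k}` on `S` and `Mbar` the intersection matrix
`(C̄_i · C̄_j)_{1≤i,j≤k-1}` on `S̄`; they are related by
`C_1² = C̄_1² - 1`, `C_{k-1}² = C̄_{k-1}² - 1`, `C_1·C_{k-1} = 0` while
`C̄_1·C̄_{k-1} = 1`, and the extra row/column for `C_k` has its only nonzero entries
`C_1·C_k = C_{k-1}·C_k = 1` and `C_k² = -1`.  Then `M` is negative definite iff
`Mbar` is negative definite.  (Index `a` corresponds to `C_1`, index `b` to
`C_{k-1}`, index `e` to `C_k = E`; `cst` is the inclusion of indices.) -/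
theorem stmt_8
    (k : ℕ) (hk : 3 ≤ k)
    (Mbar : Matrix (Fin (k - 1)) (Fin (k - 1)) ℤ)
    (M : Matrix (Fin k) (Fin k) ℤ)
    (hMbarSymm : Mbar.IsSymm) (hMSymm : M.IsSymm)
    (a b : Fin (k - 1)) (ha : (a : ℕ) = 0) (hb : (b : ℕ) = k - 2)
    (e : Fin k) (he : (e : ℕ) = k - 1)
    (cst : Fin (k - 1) → Fin k) (hcst : cst = Fin.castLE (Nat.sub_le k 1))
    (hab : Mbar a b = 1)                   -- C̄_1 · C̄_{k-1} = 1
    (h0 : ∀ i j : Fin (k - 1),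
      ¬((i = a ∨ i = b) ∧ (j = a ∨ j = b)) → M (cst i) (cst j) = Mbar i j)
    (h1 : M (cst a) (cst a) = Mbar a a - 1)   -- C_1² = C̄_1² - 1
    (h2 : M (cst b) (cst b) = Mbar b b - 1)   -- C_{k-1}² = C̄_{k-1}² - 1
    (h3 : M (cst a) (cst b) = 0)              -- C_1 · C_{k-1} = 0
    (h4 : M e e = -1)                         -- C_k² = -1
    (h5 : M (cst a) e = 1)                    -- C_1 · C_k = 1
    (h6 : M (cst b) e = 1)                    -- C_{k-1} · C_k = 1
    (h7 : ∀ i : Fin (k - 1), i ≠ a → i ≠ b → M (cst i) e = 0) :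
    ((∀ x : Fin k → ℚ, x ≠ 0 →
        dotProduct x ((M.map (Int.cast : ℤ → ℚ)).mulVec x) < 0) ↔
     (∀ x : Fin (k - 1) → ℚ, x ≠ 0 →
        dotProduct x ((Mbar.map (Int.cast : ℤ → ℚ)).mulVec x) < 0)) := by
  obtain ⟨m, rfl⟩ : ∃ m, k = m + 1 := ⟨k - 1, by omega⟩
  obtain rfl : e = Fin.last m := Fin.ext he
  obtain rfl : cst = Fin.castSucc := hcst
  have hne : a ≠ b := fun h => by omega
  have hcol : ∀ i, (M.map (Int.cast : ℤ → ℚ)) i.castSucc (Fin.last m)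
      = (Pi.single a 1 + Pi.single b 1 : Fin m → ℚ) i := by
    intro i
    by_cases hia : i = a
    · subst hia; simp [h5, hne]
    by_cases hib : i = b
    · subst hib; simp [h6, hne.symm]
    · simp [h7 i hia hib, hia, hib]
  refine negDef_iff_of_bordered _ _ _ ?_ hcol (fun j => ?_) (by simp [h4])
  · exact eq_sub_vecMulVec_single_add_single hne _ _ ((hMSymm.map _).submatrix _)
      (hMbarSymm.map _) (by simp [hab]) (fun i j hij => by simp [h0 i j hij])
      (by simp [h1]) (by simp [h2]) (by simp [h3])
  · rw [Matrix.map_apply, hMSymm.apply, ← hcol j, Matrix.map_apply]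
end

section
/- Let M̄ be a symmetric (k-1)×(k-1) real matrix and let M be the symmetric k×k matrix obtained from M̄ by: subtracting 1 from the (1,1) and (k-1,k-1) entries, replacing the (1,k-1) and (k-1,1) entries (equal to 1 in M̄) by 0, and appending a k-th row and column whose only nonzero entries are M_{1,k} = M_{k-1,k} = 1 and M_{k,k} = -1. Then M is negative definite if and only if M̄ is negative definite. -/
/-!
Write `y = (x, t)` with `t` the last coordinate and `w = e_a + e_b`. The leading block of `M` is
`M̄ - w wᵀ`, its last column is `w` and its corner is `-1`, so
`yᵀ M y = xᵀ M̄ x - (w ⬝ x - t)²`. Taking `t = w ⬝ x` shows that `M` negative definite forces `M̄`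
negative definite; conversely the square only lowers the form, and when `x = 0` we have `t ≠ 0`.
-/

open Matrix

theorem Matrix.IsSymm.dotProduct_mulVec_eq_castSucc_last {R : Type*} [CommRing R] {n : ℕ}
    {A : Matrix (Fin (n + 1)) (Fin (n + 1)) R} (hA : A.IsSymm) (y : Fin (n + 1) → R) :
    y ⬝ᵥ A *ᵥ y = Fin.init y ⬝ᵥ A.submatrix Fin.castSucc Fin.castSucc *ᵥ Fin.init y
      + 2 * y (Fin.last n) * ((fun i ↦ A i.castSucc (Fin.last n)) ⬝ᵥ Fin.init y)
      + A (Fin.last n) (Fin.last n) * y (Fin.last n) ^ 2 := by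
  have hsymm (i : Fin n) : A (Fin.last n) i.castSucc = A i.castSucc (Fin.last n) := hA.apply _ _
  simp only [dotProduct, mulVec, Fin.sum_univ_castSucc, Fin.init, submatrix_apply, hsymm,
    mul_add, Finset.sum_add_distrib, Finset.mul_sum]
  ring_nf
  rw [add_assoc, ← Finset.sum_add_distrib]
  congr 1
  exact Finset.sum_congr rfl fun i _ ↦ by ring

theorem Matrix.dotProduct_sub_vecMulVec_self_mulVec {R ι : Type*} [CommRing R] [Fintype ι]
    (B : Matrix ι ι R) (w x : ι → R) :
    x ⬝ᵥ (B - vecMulVec w w) *ᵥ x = x ⬝ᵥ B *ᵥ x - (w ⬝ᵥ x) ^ 2 := by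
  simp [sub_mulVec, dotProduct_sub, vecMulVec_mulVec, dotProduct_comm x w, sq]

theorem negDef_iff_of_dotProduct_mulVec_eq_sub_sq {n : ℕ}
    {A : Matrix (Fin (n + 1)) (Fin (n + 1)) ℝ} {B : Matrix (Fin n) (Fin n) ℝ} (w : Fin n → ℝ)
    (hAB : ∀ y, y ⬝ᵥ A *ᵥ y =
      Fin.init y ⬝ᵥ B *ᵥ Fin.init y - (w ⬝ᵥ Fin.init y - y (Fin.last n)) ^ 2) :
    (∀ y, y ≠ 0 → y ⬝ᵥ A *ᵥ y < 0) ↔ (∀ x, x ≠ 0 → x ⬝ᵥ B *ᵥ x < 0) := by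
  constructor
  · intro hA x hx
    have hy : Fin.snoc (α := fun _ ↦ ℝ) x (w ⬝ᵥ x) ≠ 0 := by
      intro h
      apply hx
      have h' := congrArg Fin.init h
      rw [Fin.init_snoc] at h'
      exact h'
    simpa [hAB, Fin.init_snoc, Fin.snoc_last] using hA _ hy
  · intro hB y hy
    rw [hAB]
    by_cases hx : Fin.init y = 0
    · have hlast : y (Fin.last n) ≠ 0 := by
        intro h; apply hy
        funext i
        exact Fin.lastCases h (fun j ↦ congrFun hx j) i
      rw [hx, mulVec_zero, dotProduct_zero, dotProduct_zero, zero_sub, zero_sub, neg_sq,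
        neg_lt_zero]
      positivity
    · nlinarith [hB _ hx, sq_nonneg (w ⬝ᵥ Fin.init y - y (Fin.last n))]

theorem Matrix.IsSymm.dotProduct_mulVec_eq_sub_sq {n : ℕ}
    {A : Matrix (Fin (n + 1)) (Fin (n + 1)) ℝ} (hA : A.IsSymm) {B : Matrix (Fin n) (Fin n) ℝ}
    {w : Fin n → ℝ}
    (hblock : A.submatrix Fin.castSucc Fin.castSucc = B - vecMulVec w w)
    (hcol : (fun i ↦ A i.castSucc (Fin.last n)) = w) (hcorner : A (Fin.last n) (Fin.last n) = -1)
    (y : Fin (n + 1) → ℝ) :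
    y ⬝ᵥ A *ᵥ y = Fin.init y ⬝ᵥ B *ᵥ Fin.init y - (w ⬝ᵥ Fin.init y - y (Fin.last n)) ^ 2 := by
  rw [hA.dotProduct_mulVec_eq_castSucc_last, hblock, hcol, hcorner,
    dotProduct_sub_vecMulVec_self_mulVec]
  ring

section PairCorrection

variable {R ι κ : Type*} [CommRing R] [DecidableEq ι] {f : ι → κ} {M : Matrix κ κ R}
  {Mbar : Matrix ι ι R} {a b : ι}

theorem submatrix_eq_sub_vecMulVec_single_add_single (hne : a ≠ b) (hM : M.IsSymm)
    (hMbar : Mbar.IsSymm) (hab : Mbar a b = 1)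
    (h0 : ∀ i j, ¬((i = a ∨ i = b) ∧ (j = a ∨ j = b)) → M (f i) (f j) = Mbar i j)
    (h1 : M (f a) (f a) = Mbar a a - 1) (h2 : M (f b) (f b) = Mbar b b - 1)
    (h3 : M (f a) (f b) = 0) :
    M.submatrix f f =
      Mbar - vecMulVec (Pi.single a 1 + Pi.single b 1) (Pi.single a 1 + Pi.single b 1) := by
  set w : ι → R := Pi.single a 1 + Pi.single b 1
  have hwa : w a = 1 := by simp [w, hne]
  have hwb : w b = 1 := by simp [w, hne.symm]
  have hw (i : ι) (hia : i ≠ a) (hib : i ≠ b) : w i = 0 := by simp [w, hia, hib]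
  ext i j
  simp only [submatrix_apply, Matrix.sub_apply, vecMulVec_apply]
  by_cases hij : (i = a ∨ i = b) ∧ (j = a ∨ j = b)
  · obtain ⟨rfl | rfl, rfl | rfl⟩ := hij
    · rw [h1, hwa]; ring
    · rw [h3, hab, hwa, hwb]; ring
    · rw [hM.apply, h3, hMbar.apply, hab, hwa, hwb]; ring
    · rw [h2, hwb]; ring
  · rw [h0 i j hij]
    rcases not_and_or.mp hij with hi | hj
    · rw [hw i (fun h ↦ hi (.inl h)) (fun h ↦ hi (.inr h))]; ring
    · rw [hw j (fun h ↦ hj (.inl h)) (fun h ↦ hj (.inr h))]; ring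

theorem column_eq_single_add_single (hne : a ≠ b) {e : κ} (h5 : M (f a) e = 1)
    (h6 : M (f b) e = 1) (h7 : ∀ i, i ≠ a → i ≠ b → M (f i) e = 0) :
    (fun i ↦ M (f i) e) = Pi.single a 1 + Pi.single b 1 := by
  funext i
  by_cases hia : i = a
  · simp [hia, h5, hne]
  by_cases hib : i = b
  · simp [hib, h6, hne.symm]
  simp [h7 i hia hib, hia, hib]

end PairCorrection

/-- Pure matrix statement: `Mbar` is a symmetric `(k-1)×(k-1)` real matrix with
`Mbar_{1,k-1} = Mbar_{k-1,1} = 1`, `k ≥ 3`, and `M` is the symmetric `k×k` matrix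
obtained from `Mbar` by subtracting `1` from the `(1,1)` and `(k-1,k-1)` entries,
replacing the `(1,k-1)` and `(k-1,1)` entries by `0`, and appending a `k`-th row and
column whose only nonzero entries are `M_{1,k} = M_{k-1,k} = 1` and `M_{k,k} = -1`.
Then `M` is negative definite iff `Mbar` is negative definite.  (Index `a` is `1`,
index `b` is `k-1`, index `e` is `k`, in 1-based numbering; `cst` is the inclusion.) -/
theorem stmt_9
    (k : ℕ) (hk : 3 ≤ k)
    (Mbar : Matrix (Fin (k - 1)) (Fin (k - 1)) ℝ)
    (M : Matrix (Fin k) (Fin k) ℝ)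
    (hMbarSymm : Mbar.IsSymm) (hMSymm : M.IsSymm)
    (a b : Fin (k - 1)) (ha : (a : ℕ) = 0) (hb : (b : ℕ) = k - 2)
    (e : Fin k) (he : (e : ℕ) = k - 1)
    (cst : Fin (k - 1) → Fin k) (hcst : cst = Fin.castLE (Nat.sub_le k 1))
    (hab : Mbar a b = 1)
    (h0 : ∀ i j : Fin (k - 1),
      ¬((i = a ∨ i = b) ∧ (j = a ∨ j = b)) → M (cst i) (cst j) = Mbar i j)
    (h1 : M (cst a) (cst a) = Mbar a a - 1)
    (h2 : M (cst b) (cst b) = Mbar b b - 1)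
    (h3 : M (cst a) (cst b) = 0)
    (h4 : M e e = -1)
    (h5 : M (cst a) e = 1)
    (h6 : M (cst b) e = 1)
    (h7 : ∀ i : Fin (k - 1), i ≠ a → i ≠ b → M (cst i) e = 0) :
    ((∀ x : Fin k → ℝ, x ≠ 0 → dotProduct x (M.mulVec x) < 0) ↔
     (∀ x : Fin (k - 1) → ℝ, x ≠ 0 → dotProduct x (Mbar.mulVec x) < 0)) := by
  obtain ⟨n, rfl⟩ : ∃ n, k = n + 1 := ⟨k - 1, by omega⟩
  obtain rfl : e = Fin.last n := Fin.ext he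
  obtain rfl : cst = Fin.castSucc := hcst
  have hne : a ≠ b := fun h ↦ by rw [h] at ha; omega
  -- `Fin (n + 1 - 1)` reduces to `Fin n`, so the lemmas about `Fin n` apply as they stand.
  exact negDef_iff_of_dotProduct_mulVec_eq_sub_sq _ <| hMSymm.dotProduct_mulVec_eq_sub_sq
    (submatrix_eq_sub_vecMulVec_single_add_single hne hMSymm hMbarSymm hab h0 h1 h2 h3)
    (column_eq_single_add_single hne h5 h6 h7) h4
end

section
/- Let S be a smooth rational surface with an anti-canonical cycle C = C_1 + ... + C_k, Zariski decomposition C = P + N with P ≠ 0 and P² = 0, m₀P = Σ l_iC_i as usual. Suppose the point C_k ∩ C_1 is blown up via π: S̃ → S, with exceptional curve C̃_{k+1} and strict transforms C̃_i. Set l_{k+1} = l_1 + l_k and D̃ = Σ_{i=1}^{k+1} l_i C̃_i. Then D̃·C̃_i = 0 for all i = 1, ..., k+1; in particular D̃ is nef and D̃² = 0. -/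
/-- Blow-up at the node `C_k ∩ C_1` of an anticanonical cycle `C = C_1 + … + C_k`
with Zariski decomposition `C = P + N`, `P ≠ 0`, `P² = 0`, `m₀P = ∑ lᵢ Cᵢ`, all
`lᵢ > 0` and `P·Cᵢ = 0`.  Here `d i j = C_i·C_j` on `S`; index `z` corresponds to
`C_1`, index `w` to `C_k`, `cst` includes old indices, `e` is the exceptional curve
`C̃_{k+1}`, `dt i j = C̃_i·C̃_j` on `S̃` (so `C̃_1² = C_1² - 1`, `C̃_k² = C_k² - 1`,
`C̃_1·C̃_k = 0`, `C̃_{k+1}² = -1`, `C̃_{k+1}` meets `C̃_1` and `C̃_k` once).  With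
`l_{k+1} = l_1 + l_k` and `D̃ = ∑ l_i C̃_i`, one has `D̃·C̃_i = 0` for all `i`;
in particular `D̃` is nef (against the components) and `D̃² = 0`. -/
theorem stmt_10
    (k : ℕ) (hk : 3 ≤ k)
    (d : Fin k → Fin k → ℤ)
    (hdsym : ∀ i j, d i j = d j i)
    (z w : Fin k) (hz : (z : ℕ) = 0) (hw : (w : ℕ) = k - 1)
    (hzw : d z w = 1)                          -- C_1 · C_k = 1 (the blown-up node)
    (l : Fin k → ℕ) (hl : ∀ i, 0 < l i)
    (hPC : ∀ i, ∑ j, (l j : ℤ) * d j i = 0)    -- m₀P · C_i = 0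
    (cst : Fin k → Fin (k + 1)) (hcst : cst = Fin.castSucc)
    (e : Fin (k + 1)) (he : e = Fin.last k)
    (dt : Fin (k + 1) → Fin (k + 1) → ℤ)
    (hdtsym : ∀ i j, dt i j = dt j i)
    (ht0 : ∀ i j : Fin k, ¬((i = z ∨ i = w) ∧ (j = z ∨ j = w)) →
      dt (cst i) (cst j) = d i j)
    (ht1 : dt (cst z) (cst z) = d z z - 1)
    (ht2 : dt (cst w) (cst w) = d w w - 1)
    (ht3 : dt (cst z) (cst w) = 0)
    (ht4 : dt e e = -1)
    (ht5 : dt e (cst z) = 1) (ht6 : dt e (cst w) = 1)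
    (ht7 : ∀ i : Fin k, i ≠ z → i ≠ w → dt e (cst i) = 0)
    (lt : Fin (k + 1) → ℕ)
    (hlt : ∀ i : Fin k, lt (cst i) = l i)
    (hlte : lt e = l z + l w) :                -- l_{k+1} = l_1 + l_k
    (∀ i : Fin (k + 1), ∑ j, (lt j : ℤ) * dt j i = 0) ∧
    (∀ i : Fin (k + 1), 0 ≤ ∑ j, (lt j : ℤ) * dt j i) ∧
    (∑ i, (lt i : ℤ) * ∑ j, (lt j : ℤ) * dt j i) = 0 := by

  subst hcst he
  have hzw' : z ≠ w := by
    intro h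
    have : (z : ℕ) = (w : ℕ) := by rw [h]
    omega
  have key : ∀ i : Fin (k + 1), ∑ j, (lt j : ℤ) * dt j i = 0 := by
    intro i
    rw [Fin.sum_univ_castSucc]
    induction i using Fin.lastCases with
    | last =>
      have hsum : ∑ j : Fin k, (lt j.castSucc : ℤ) * dt j.castSucc (Fin.last k)
          = ∑ j : Fin k, ((if j = z then (l z : ℤ) else 0)
              + (if j = w then (l w : ℤ) else 0)) := by
        refine Finset.sum_congr rfl fun j _ => ?_
        rw [hlt, hdtsym]
        by_cases hjz : j = z
        · subst hjz
          rw [ht5, if_pos rfl, if_neg hzw']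
          ring
        by_cases hjw : j = w
        · subst hjw
          rw [ht6, if_neg hjz, if_pos rfl]
          ring
        · rw [ht7 j hjz hjw, if_neg hjz, if_neg hjw]
          ring
      rw [hsum, Finset.sum_add_distrib,
        Finset.sum_ite_eq' Finset.univ z (fun _ => (l z : ℤ)),
        Finset.sum_ite_eq' Finset.univ w (fun _ => (l w : ℤ)),
        if_pos (Finset.mem_univ _), if_pos (Finset.mem_univ _), hlte, ht4]
      push_cast
      ring
    | cast i₀ =>
      by_cases hi₀z : i₀ = z
      · subst hi₀z
        have hsum : ∑ j : Fin k, (lt j.castSucc : ℤ) * dt j.castSucc i₀.castSucc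
            = ∑ j : Fin k, (((l j : ℤ) * d j i₀)
              - (if j = i₀ then (l i₀ : ℤ) else 0) - (if j = w then (l w : ℤ) else 0)) := by
          refine Finset.sum_congr rfl fun j _ => ?_
          rw [hlt]
          by_cases hjz : j = i₀
          · subst hjz
            rw [ht1, if_pos rfl, if_neg hzw']
            ring
          by_cases hjw : j = w
          · subst hjw
            rw [hdtsym, ht3, if_neg hjz, if_pos rfl, hdsym, hzw]
            ring
          · rw [ht0 j i₀ (fun h => h.1.elim hjz hjw), if_neg hjz, if_neg hjw]
            ring
        rw [hsum, Finset.sum_sub_distrib, Finset.sum_sub_distrib,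
          Finset.sum_ite_eq' Finset.univ i₀ (fun _ => (l i₀ : ℤ)),
          Finset.sum_ite_eq' Finset.univ w (fun _ => (l w : ℤ)),
          if_pos (Finset.mem_univ _), if_pos (Finset.mem_univ _),
          hPC i₀, hlte, ht5]
        push_cast
        ring
      by_cases hi₀w : i₀ = w
      · subst hi₀w
        have hsum : ∑ j : Fin k, (lt j.castSucc : ℤ) * dt j.castSucc i₀.castSucc
            = ∑ j : Fin k, (((l j : ℤ) * d j i₀)
              - (if j = z then (l z : ℤ) else 0) - (if j = i₀ then (l i₀ : ℤ) else 0)) := by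
          refine Finset.sum_congr rfl fun j _ => ?_
          rw [hlt]
          by_cases hjz : j = z
          · subst hjz
            rw [ht3, if_pos rfl, if_neg hzw', hzw]
            ring
          by_cases hjw : j = i₀
          · subst hjw
            rw [ht2, if_neg hjz, if_pos rfl]
            ring
          · rw [ht0 j i₀ (fun h => h.1.elim hjz hjw), if_neg hjz, if_neg hjw]
            ring
        rw [hsum, Finset.sum_sub_distrib, Finset.sum_sub_distrib,
          Finset.sum_ite_eq' Finset.univ z (fun _ => (l z : ℤ)),
          Finset.sum_ite_eq' Finset.univ i₀ (fun _ => (l i₀ : ℤ)),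
          if_pos (Finset.mem_univ _), if_pos (Finset.mem_univ _),
          hPC i₀, hlte, ht6]
        push_cast
        ring
      · have hsum : ∑ j : Fin k, (lt j.castSucc : ℤ) * dt j.castSucc i₀.castSucc
            = ∑ j : Fin k, (l j : ℤ) * d j i₀ := by
          refine Finset.sum_congr rfl fun j _ => ?_
          rw [hlt, ht0 j i₀ (fun h => h.2.elim hi₀z hi₀w)]
        rw [hsum, hPC i₀, ht7 i₀ hi₀z hi₀w, mul_zero, add_zero]
  refine ⟨key, fun i => (key i).ge, ?_⟩
  simp [key]
end
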